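/- For the complete bipartite graph K_{m,n} with m + n > 7, there is no distribution R such that M̂_R = (1/(m+n))J; equivalently, the multiplicity bound 1 + 1 + (m+n−2)² ≤ (m+n)(m+n+1)/2 fails for m+n ≥ 8. -/

import Mathlib

/-!
The adjacency matrix `A` of `K_{m,n}` satisfies `A ^ 3 = m n A`, so its eigenvalues are
`±k` and `0` with `k = √(mn)`, and the spectral idempotent of each is a Lagrange interpolant
`(A ^ 2 + x A + (x ^ 2 - mn) I) / (3 x ^ 2 - mn)`. Symmetrising the cross terms gives
`M̂ = ∑_{r,s} (∫ cos ((θ_r - θ_s) t)) E_r ∘ E_s`, and with `a = ∫ cos (2kt)`, `b = ∫ cos (kt)`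
uniformity `M̂ = J / (m+n)` reads off three equations: an entry between the two sides gives
`(1 - a)(m + n) = 2mn`, and a diagonal against an off-diagonal entry inside a side of size
`p ≥ 2` gives `p = 2 - 2b`. As `a, b ≥ -1`, both sides have size at most `4`, so `m + n ≥ 8`
forces `m = n = 4`, and then `a = -3`.
-/

open Matrix MeasureTheory
open scoped Matrix

/-- The average mixing matrix under a sampling distribution `μ`, expressed via the
(real) spectral idempotents `E r` with eigenvalues `θ r`. -/
noncomputable def ammR {V : Type*} [Fintype V] {d : ℕ} (θ : Fin d → ℝ)
    (E : Fin d → Matrix V V ℝ) (μ : Measure ℝ) : Matrix V V ℝ :=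
  (∑ r, E r ⊙ E r) +
    ∑ r, ∑ s ∈ Finset.univ.filter (· < r),
      (2 * ∫ t, Real.cos ((θ r - θ s) * t) ∂μ) • (E r ⊙ E s)

lemma Fintype.sum_sum_eq_sum_diag_add_two_nsmul_sum_lt {ι M : Type*} [Fintype ι] [LinearOrder ι]
    [AddCommMonoid M] (f : ι → ι → M) (hf : ∀ r s, f r s = f s r) :
    ∑ r, ∑ s, f r s = ∑ r, f r r + 2 • ∑ r, ∑ s ∈ Finset.univ.filter (· < r), f r s := by
  have hsplit : ∀ r s, f r s = (if s < r then f r s else 0) + (if s = r then f r s else 0)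
      + (if r < s then f s r else 0) := by
    intro r s
    rcases lt_trichotomy s r with h | rfl | h
    · simp [h, h.ne, h.not_gt]
    · simp
    · simp [h, h.ne', h.not_gt, hf r s]
  have hswap : ∑ r, ∑ s, (if r < s then f s r else 0)
      = ∑ r, ∑ s, (if s < r then f r s else 0) := Finset.sum_comm
  simp_rw [Finset.sum_filter]
  conv_lhs => rw [Fintype.sum_congr _ _ fun r => Fintype.sum_congr _ _ (hsplit r)]
  simp only [Finset.sum_add_distrib, hswap, Finset.sum_ite_eq', Finset.mem_univ, if_true,
    two_nsmul]
  abel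

section SpectralDecomposition

variable {V ι : Type*} [Fintype V] [DecidableEq V] [Fintype ι] {θ : ι → ℝ} {E : ι → Matrix V V ℝ}

lemma eq_sum_smul_of_mul_eq_smul (hsum : ∑ r, E r = 1) {P : Matrix V V ℝ} {c : ι → ℝ}
    (hP : ∀ r, P * E r = c r • E r) : P = ∑ r, c r • E r := by
  rw [← Matrix.mul_one P, ← hsum, Finset.mul_sum]
  exact Fintype.sum_congr _ _ hP

variable [DecidableEq ι]

lemma exists_eq_of_mul_eq_ite (hθ : Function.Injective θ) (hsum : ∑ r, E r = 1)
    {P : Matrix V V ℝ} {x : ℝ} (hP : ∀ r, P * E r = if θ r = x then E r else 0) (hP0 : P ≠ 0) :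
    ∃ r, θ r = x ∧ E r = P := by
  have hPsum : P = ∑ r, (if θ r = x then 1 else 0 : ℝ) • E r :=
    eq_sum_smul_of_mul_eq_smul hsum fun r => by rw [hP r]; split_ifs <;> simp
  by_cases hx : ∃ r, θ r = x
  · obtain ⟨r, rfl⟩ := hx
    exact ⟨r, rfl, by simp [hPsum, hθ.eq_iff]⟩
  · simp only [not_exists] at hx
    simp [hx] at hPsum
    exact absurd hPsum hP0

lemma sum_smul_mul_of_orthogonal (horth : ∀ r s, E r * E s = if r = s then E r else 0) (r : ι) :
    (∑ s, θ s • E s) * E r = θ r • E r := by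
  simp [Finset.sum_mul, horth]

end SpectralDecomposition

/-- An entry of the average mixing matrix when the eigenvalues are `k, -k, 0`, in terms of the
corresponding entries `u, v, w` of the idempotents and of `a = ∫ cos (2kt)`, `b = ∫ cos (kt)`. -/
def mixingEntry (a b u v w : ℝ) : ℝ :=
  u ^ 2 + v ^ 2 + w ^ 2 + 2 * a * u * v + 2 * b * (u + v) * w

section AverageMixing

variable {μ : Measure ℝ}

lemma integral_cos_sub_mul_comm (x y : ℝ) :
    ∫ t, Real.cos ((x - y) * t) ∂μ = ∫ t, Real.cos ((y - x) * t) ∂μ := by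
  congr 1 with t
  rw [← Real.cos_neg, ← neg_mul, neg_sub]

lemma neg_one_le_integral_cos [IsProbabilityMeasure μ] (x : ℝ) :
    -1 ≤ ∫ t, Real.cos (x * t) ∂μ := by
  have h := norm_integral_le_of_norm_le_const (μ := μ) (f := fun t => Real.cos (x * t)) (C := 1)
    (Filter.Eventually.of_forall fun t => Real.abs_cos_le_one (x * t))
  simp only [probReal_univ, mul_one, Real.norm_eq_abs] at h
  exact (abs_le.mp h).1

variable [IsProbabilityMeasure μ] {V : Type*} [Fintype V] {d : ℕ}

lemma ammR_eq_sum_sum (θ : Fin d → ℝ) (E : Fin d → Matrix V V ℝ) :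
    ammR θ E μ = ∑ r, ∑ s, (∫ t, Real.cos ((θ r - θ s) * t) ∂μ) • (E r ⊙ E s) := by
  rw [Fintype.sum_sum_eq_sum_diag_add_two_nsmul_sum_lt _ fun r s => by
    rw [integral_cos_sub_mul_comm, Matrix.hadamard_comm]]
  simp [ammR, Finset.smul_sum, mul_smul, two_smul]

lemma ammR_eq_sum_sum_of_support {ι : Type*} [Fintype ι] (θ : Fin d → ℝ)
    (E : Fin d → Matrix V V ℝ) (e : ι → Fin d) (he : Function.Injective e)
    (hsupp : ∀ r ∉ Set.range e, E r = 0) :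
    ammR θ E μ = ∑ i, ∑ j,
      (∫ t, Real.cos ((θ (e i) - θ (e j)) * t) ∂μ) • (E (e i) ⊙ E (e j)) := by
  rw [ammR_eq_sum_sum]
  refine (Fintype.sum_of_injective e he _ _ (fun r hr => ?_) fun i => ?_).symm
  · exact Finset.sum_eq_zero fun s _ => by simp [hsupp r hr]
  · exact Fintype.sum_of_injective e he _ _ (fun s hs => by simp [hsupp s hs]) fun j => rfl

lemma ammR_apply_of_support_three {θ : Fin d → ℝ} {E : Fin d → Matrix V V ℝ}
    {e : Fin 3 → Fin d} {k : ℝ} (he : Function.Injective e) (hsupp : ∀ r ∉ Set.range e, E r = 0)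
    (hθe : ∀ i, θ (e i) = ![k, -k, 0] i) (x y : V) :
    ammR θ E μ x y = mixingEntry (∫ t, Real.cos (2 * k * t) ∂μ) (∫ t, Real.cos (k * t) ∂μ)
      (E (e 0) x y) (E (e 1) x y) (E (e 2) x y) := by
  rw [ammR_eq_sum_sum_of_support θ E e he hsupp, mixingEntry]
  simp only [Fin.sum_univ_three, hθe, Matrix.add_apply, Matrix.sum_apply]
  simp [show k + k = 2 * k by ring, show -k - k = -(2 * k) by ring]
  ring

end AverageMixing

lemma lagrange_coeff_cubic {c x y : ℝ} (hc : c ≠ 0) (hx : x ^ 3 = c * x) (hy : y ^ 3 = c * y) :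
    (3 * x ^ 2 - c)⁻¹ * (y * y + x * y + (x ^ 2 - c)) = if y = x then 1 else 0 := by
  have hx' : 3 * x ^ 2 - c ≠ 0 := by
    intro h
    rcases eq_or_ne x 0 with rfl | hx0
    · exact hc (by linarith)
    · have : x ^ 2 = c := mul_left_cancel₀ hx0 (by linear_combination hx)
      exact hc (by linarith)
  split_ifs with hxy
  · subst hxy; field_simp; ring
  · have : (y - x) * (y * y + x * y + (x ^ 2 - c)) = 0 := by linear_combination hy - hx
    simp [(mul_eq_zero.mp this).resolve_left (sub_ne_zero.mpr hxy)]

lemma eq_or_eq_neg_or_eq_zero_of_cube_eq {k y : ℝ} (hy : y ^ 3 = k ^ 2 * y) :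
    y = k ∨ y = -k ∨ y = 0 := by
  have : (y - k) * ((y + k) * y) = 0 := by linear_combination hy
  rcases mul_eq_zero.mp this with h | h
  · exact .inl (sub_eq_zero.mp h)
  rcases mul_eq_zero.mp h with h | h
  · exact .inr (.inl (eq_neg_of_add_eq_zero_left h))
  · exact .inr (.inr h)

section CubicSpectrum

variable {V : Type*} [Fintype V] {A : Matrix V V ℝ} {c : ℝ}

lemma cube_eq_of_mul_eq_smul {F : Matrix V V ℝ} {y : ℝ} (hAF : A * F = y • F)
    (hA3 : A * (A * A) = c • A) (hF : F ≠ 0) : y ^ 3 = c * y := by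
  have hcube : A * (A * A) * F = y ^ 3 • F := by
    simp only [hAF, Matrix.mul_smul, smul_smul, pow_three, mul_assoc]
  have h : (y ^ 3 - c * y) • F = 0 := by
    rw [sub_smul, ← hcube, hA3, Matrix.smul_mul, hAF, smul_smul, sub_self]
  exact sub_eq_zero.mp ((smul_eq_zero.mp h).resolve_right hF)

variable [DecidableEq V]

/-- For `A ^ 3 = c • A`, the projection onto the `x`-eigenspace is `q(A) / ((A - x) q'(x))` with
`q = X ^ 3 - c X`. -/
noncomputable def cubicEigenproj (A : Matrix V V ℝ) (c x : ℝ) : Matrix V V ℝ :=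
  (3 * x ^ 2 - c)⁻¹ • (A * A + x • A + (x ^ 2 - c) • 1)

lemma cubicEigenproj_mul_of_mul_eq_smul {F : Matrix V V ℝ} {x y : ℝ} (hAF : A * F = y • F) :
    cubicEigenproj A c x * F = ((3 * x ^ 2 - c)⁻¹ * (y * y + x * y + (x ^ 2 - c))) • F := by
  simp only [cubicEigenproj, Matrix.smul_mul, Matrix.add_mul, Matrix.mul_assoc, hAF,
    Matrix.mul_smul, Matrix.one_mul, smul_smul, ← add_smul]

variable {ι : Type*} [Fintype ι] [DecidableEq ι] {θ : ι → ℝ} {E : ι → Matrix V V ℝ}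

lemma exists_eq_cubicEigenproj (hθ : Function.Injective θ) (hA : A = ∑ r, θ r • E r)
    (horth : ∀ r s, E r * E s = if r = s then E r else 0) (hsum : ∑ r, E r = 1) (hc : c ≠ 0)
    (hA3 : A * (A * A) = c • A) {x : ℝ} (hx : x ^ 3 = c * x) (hP : cubicEigenproj A c x ≠ 0) :
    ∃ r, θ r = x ∧ E r = cubicEigenproj A c x := by
  refine exists_eq_of_mul_eq_ite hθ hsum (fun r => ?_) hP
  have hAE : A * E r = θ r • E r := hA ▸ sum_smul_mul_of_orthogonal horth r
  by_cases hE : E r = 0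
  · simp [hE]
  rw [cubicEigenproj_mul_of_mul_eq_smul hAE,
    lagrange_coeff_cubic hc hx (cube_eq_of_mul_eq_smul hAE hA3 hE)]
  split_ifs <;> simp

lemma exists_embedding_cubicEigenproj {k : ℝ} (hθ : Function.Injective θ)
    (hA : A = ∑ r, θ r • E r) (horth : ∀ r s, E r * E s = if r = s then E r else 0)
    (hsum : ∑ r, E r = 1) (hk : k ≠ 0) (hA3 : A * (A * A) = k ^ 2 • A)
    (hP : ∀ i, cubicEigenproj A (k ^ 2) (![k, -k, 0] i) ≠ 0) :
    ∃ e : Fin 3 → ι, Function.Injective e ∧ (∀ r ∉ Set.range e, E r = 0) ∧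
      ∀ i, θ (e i) = ![k, -k, 0] i ∧ E (e i) = cubicEigenproj A (k ^ 2) (![k, -k, 0] i) := by
  have hroot : ∀ i, (![k, -k, 0] i) ^ 3 = k ^ 2 * ![k, -k, 0] i := by
    intro i; fin_cases i <;> simp <;> ring
  choose e he using fun i => exists_eq_cubicEigenproj hθ hA horth hsum (pow_ne_zero 2 hk) hA3
    (hroot i) (hP i)
  refine ⟨e, fun i j hij => ?_, fun r hr => ?_, he⟩
  · have := (he i).1.symm.trans (hij ▸ (he j).1)
    fin_cases i <;> fin_cases j <;> simp at this ⊢ <;> grind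
  · by_contra hE
    have hAE : A * E r = θ r • E r := hA ▸ sum_smul_mul_of_orthogonal horth r
    obtain ⟨i, hi⟩ : ∃ i, ![k, -k, 0] i = θ r := by
      rcases eq_or_eq_neg_or_eq_zero_of_cube_eq (cube_eq_of_mul_eq_smul hAE hA3 hE) with h | h | h
      exacts [⟨0, h.symm⟩, ⟨1, h.symm⟩, ⟨2, h.symm⟩]
    exact hr ⟨i, hθ ((he i).1.trans hi)⟩

end CubicSpectrum

lemma false_of_uniform_mixing_constraints {p q : ℕ} {a b : ℝ} (h8 : 8 ≤ p + q) (ha : -1 ≤ a)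
    (hb : -1 ≤ b) (hcross : (1 - a) * (p + q) = 2 * p * q) (hp : 2 ≤ p → (p : ℝ) = 2 - 2 * b)
    (hq : 2 ≤ q → (q : ℝ) = 2 - 2 * b) : False := by
  have hp4 : p ≤ 4 := by
    by_cases h : 2 ≤ p
    · exact_mod_cast (show (p : ℝ) ≤ 4 by linarith [hp h])
    · omega
  have hq4 : q ≤ 4 := by
    by_cases h : 2 ≤ q
    · exact_mod_cast (show (q : ℝ) ≤ 4 by linarith [hq h])
    · omega
  obtain ⟨rfl, rfl⟩ : p = 4 ∧ q = 4 := by omega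
  norm_num at hcross
  linarith

section CompleteBipartite

variable {α β : Type*} [Fintype α] [Fintype β] [DecidableRel (completeBipartiteGraph α β).Adj]

local notation "𝔸" => SimpleGraph.adjMatrix ℝ (completeBipartiteGraph α β)
local notation "p" => (Fintype.card α : ℝ)
local notation "q" => (Fintype.card β : ℝ)

@[simp]
lemma completeBipartite_adjMatrix_sq_inl_inl (i i' : α) : (𝔸 * 𝔸) (.inl i) (.inl i') = q := by
  simp [Matrix.mul_apply, Fintype.sum_sum_type, SimpleGraph.adjMatrix_apply]

@[simp]
lemma completeBipartite_adjMatrix_sq_inr_inr (j j' : β) : (𝔸 * 𝔸) (.inr j) (.inr j') = p := by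
  simp [Matrix.mul_apply, Fintype.sum_sum_type, SimpleGraph.adjMatrix_apply]

@[simp]
lemma completeBipartite_adjMatrix_sq_inl_inr (i : α) (j : β) : (𝔸 * 𝔸) (.inl i) (.inr j) = 0 := by
  simp [Matrix.mul_apply, Fintype.sum_sum_type, SimpleGraph.adjMatrix_apply]

@[simp]
lemma completeBipartite_adjMatrix_sq_inr_inl (i : α) (j : β) : (𝔸 * 𝔸) (.inr j) (.inl i) = 0 := by
  simp [Matrix.mul_apply, Fintype.sum_sum_type, SimpleGraph.adjMatrix_apply]

lemma completeBipartite_adjMatrix_cube : 𝔸 * (𝔸 * 𝔸) = (p * q) • 𝔸 := by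
  ext (i | j) (i' | j') <;>
    simp [Matrix.mul_apply, Fintype.sum_sum_type, SimpleGraph.adjMatrix_apply, mul_comm]

lemma completeBipartite_trace_adjMatrix_sq : (𝔸 * 𝔸).trace = 2 * p * q := by
  simp only [Matrix.trace, Matrix.diag, Fintype.sum_sum_type,
    completeBipartite_adjMatrix_sq_inl_inl, completeBipartite_adjMatrix_sq_inr_inr,
    Finset.sum_const, Finset.card_univ, nsmul_eq_mul]
  ring

variable [DecidableEq α] [DecidableEq β]

local notation "𝐏" => cubicEigenproj 𝔸

lemma completeBipartite_trace_cubicEigenproj (c x : ℝ) :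
    (𝐏 c x).trace = (3 * x ^ 2 - c)⁻¹ * (2 * p * q + (x ^ 2 - c) * (p + q)) := by
  simp [cubicEigenproj, completeBipartite_trace_adjMatrix_sq]
  ring

lemma completeBipartite_cubicEigenproj_inl_inr (c x : ℝ) (i : α) (j : β) :
    𝐏 c x (.inl i) (.inr j) = (3 * x ^ 2 - c)⁻¹ * x := by
  simp [cubicEigenproj, SimpleGraph.adjMatrix_apply]

lemma completeBipartite_cubicEigenproj_inl_inl (c x : ℝ) (i i' : α) :
    𝐏 c x (.inl i) (.inl i') =
      (3 * x ^ 2 - c)⁻¹ * (q + if i = i' then x ^ 2 - c else 0) := by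
  rw [cubicEigenproj, Matrix.smul_apply, Matrix.add_apply, Matrix.add_apply,
    completeBipartite_adjMatrix_sq_inl_inl]
  simp [SimpleGraph.adjMatrix_apply, Matrix.one_apply]

lemma completeBipartite_cubicEigenproj_inr_inr (c x : ℝ) (j j' : β) :
    𝐏 c x (.inr j) (.inr j') =
      (3 * x ^ 2 - c)⁻¹ * (p + if j = j' then x ^ 2 - c else 0) := by
  rw [cubicEigenproj, Matrix.smul_apply, Matrix.add_apply, Matrix.add_apply,
    completeBipartite_adjMatrix_sq_inr_inr]
  simp [SimpleGraph.adjMatrix_apply, Matrix.one_apply]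

lemma completeBipartite_exists_embedding_cubicEigenproj {ι : Type*} [Fintype ι] [DecidableEq ι]
    {θ : ι → ℝ} {E : ι → Matrix (α ⊕ β) (α ⊕ β) ℝ} (hθ : Function.Injective θ)
    (hA : 𝔸 = ∑ r, θ r • E r) (horth : ∀ r s, E r * E s = if r = s then E r else 0)
    (hsum : ∑ r, E r = 1) (hα : 0 < Fintype.card α) (hβ : 0 < Fintype.card β)
    (h3 : 3 ≤ Fintype.card α + Fintype.card β) {k : ℝ} (hk : k ^ 2 = p * q) :
    ∃ e : Fin 3 → ι, Function.Injective e ∧ (∀ r ∉ Set.range e, E r = 0) ∧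
      ∀ i, θ (e i) = ![k, -k, 0] i ∧ E (e i) = 𝐏 (k ^ 2) (![k, -k, 0] i) := by
  have hpq : 0 < p * q := by positivity
  have h3' : (3 : ℝ) ≤ p + q := by exact_mod_cast h3
  have hk0 : k ≠ 0 := by rintro rfl; linarith
  refine exists_embedding_cubicEigenproj hθ hA horth hsum hk0
    (by rw [hk]; exact completeBipartite_adjMatrix_cube) fun i hP => ?_
  -- the traces `1, 1, p + q - 2` of `𝐏 (k ^ 2) x`, `x = k, -k, 0`, are the multiplicities
  have htr := completeBipartite_trace_cubicEigenproj (α := α) (β := β) (k ^ 2) (![k, -k, 0] i)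
  rw [hP, Matrix.trace_zero, hk] at htr
  fin_cases i <;> simp [hk, hα.ne', hβ.ne'] at htr <;> nlinarith

lemma completeBipartite_cross_of_uniform {k a b : ℝ} (hk : k ^ 2 = p * q)
    (hkey : ∀ x y, mixingEntry a b (𝐏 (k ^ 2) k x y) (𝐏 (k ^ 2) (-k) x y) (𝐏 (k ^ 2) 0 x y)
      = (p + q)⁻¹) (i : α) (j : β) :
    (1 - a) * (p + q) = 2 * p * q := by
  have hp : 0 < p := by exact_mod_cast Fintype.card_pos_iff.mpr ⟨i⟩
  have hq : 0 < q := by exact_mod_cast Fintype.card_pos_iff.mpr ⟨j⟩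
  have h := hkey (.inl i) (.inr j)
  simp [mixingEntry, completeBipartite_cubicEigenproj_inl_inr, hk] at h
  field_simp at h
  have hfac : (p * q) * ((1 - a) * (p + q) - 2 * p * q) = 0 := by
    linear_combination h / 2 - (1 - a) * (p + q) * hk
  exact sub_eq_zero.mp ((mul_eq_zero.mp hfac).resolve_left (by positivity))

lemma completeBipartite_card_left_of_uniform {k a b : ℝ} (hk : k ^ 2 = p * q)
    (hkey : ∀ x y, mixingEntry a b (𝐏 (k ^ 2) k x y) (𝐏 (k ^ 2) (-k) x y) (𝐏 (k ^ 2) 0 x y)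
      = (p + q)⁻¹) (hβ : 0 < Fintype.card β) (h2 : 2 ≤ Fintype.card α) :
    p = 2 - 2 * b := by
  have hp : 0 < p := by exact_mod_cast (show 0 < Fintype.card α by omega)
  have hq : 0 < q := by exact_mod_cast hβ
  obtain ⟨i, i', hii'⟩ := Fintype.exists_pair_of_one_lt_card h2
  have hd := hkey (.inl i) (.inl i)
  have ho := hkey (.inl i) (.inl i')
  simp [mixingEntry, completeBipartite_cubicEigenproj_inl_inl, hk, hii'] at hd ho
  field_simp at hd ho
  have hfac : ((p + q) * p) * (p - (2 - 2 * b)) = 0 := by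
    linear_combination (hd - ho) / 4
  exact sub_eq_zero.mp ((mul_eq_zero.mp hfac).resolve_left (by positivity))

lemma completeBipartite_card_right_of_uniform {k a b : ℝ} (hk : k ^ 2 = p * q)
    (hkey : ∀ x y, mixingEntry a b (𝐏 (k ^ 2) k x y) (𝐏 (k ^ 2) (-k) x y) (𝐏 (k ^ 2) 0 x y)
      = (p + q)⁻¹) (hα : 0 < Fintype.card α) (h2 : 2 ≤ Fintype.card β) :
    q = 2 - 2 * b := by
  have hp : 0 < p := by exact_mod_cast hα
  have hq : 0 < q := by exact_mod_cast (show 0 < Fintype.card β by omega)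
  obtain ⟨j, j', hjj'⟩ := Fintype.exists_pair_of_one_lt_card h2
  have hd := hkey (.inr j) (.inr j)
  have ho := hkey (.inr j) (.inr j')
  simp [mixingEntry, completeBipartite_cubicEigenproj_inr_inr, hk, hjj'] at hd ho
  field_simp at hd ho
  have hfac : ((p + q) * q) * (q - (2 - 2 * b)) = 0 := by
    linear_combination (hd - ho) / 4
  exact sub_eq_zero.mp ((mul_eq_zero.mp hfac).resolve_left (by positivity))

lemma completeBipartite_ammR_ne_uniform {d : ℕ} {θ : Fin d → ℝ}
    {E : Fin d → Matrix (α ⊕ β) (α ⊕ β) ℝ} {μ : Measure ℝ} [IsProbabilityMeasure μ]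
    (hθ : Function.Injective θ) (hA : 𝔸 = ∑ r, θ r • E r)
    (horth : ∀ r s, E r * E s = if r = s then E r else 0) (hsum : ∑ r, E r = 1)
    (hα : 0 < Fintype.card α) (hβ : 0 < Fintype.card β)
    (h8 : 8 ≤ Fintype.card α + Fintype.card β) :
    ammR θ E μ ≠ (1 / (p + q)) • Matrix.of fun _ _ => 1 := by
  intro hmix
  obtain ⟨k, hk⟩ : ∃ k : ℝ, k ^ 2 = p * q := ⟨_, Real.sq_sqrt (by positivity)⟩
  obtain ⟨e, he, hsupp, hθe⟩ :=
    completeBipartite_exists_embedding_cubicEigenproj hθ hA horth hsum hα hβ (by omega) hk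
  have hkey : ∀ x y, mixingEntry (∫ t, Real.cos (2 * k * t) ∂μ) (∫ t, Real.cos (k * t) ∂μ)
      (𝐏 (k ^ 2) k x y) (𝐏 (k ^ 2) (-k) x y) (𝐏 (k ^ 2) 0 x y) = (p + q)⁻¹ := fun x y => by
    have h := ammR_apply_of_support_three (μ := μ) he hsupp (fun i => (hθe i).1) x y
    rw [(hθe 0).2, (hθe 1).2, (hθe 2).2, hmix] at h
    simpa using h.symm
  obtain ⟨i⟩ := Fintype.card_pos_iff.mp hα
  obtain ⟨j⟩ := Fintype.card_pos_iff.mp hβ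
  exact false_of_uniform_mixing_constraints h8 (neg_one_le_integral_cos _)
    (neg_one_le_integral_cos _) (completeBipartite_cross_of_uniform hk hkey i j)
    (completeBipartite_card_left_of_uniform hk hkey hβ)
    (completeBipartite_card_right_of_uniform hk hkey hα)

end CompleteBipartite

lemma half_mul_add_one_lt_two_add_sub_two_sq {v : ℝ} (hv : 8 ≤ v) :
    v * (v + 1) / 2 < 1 + 1 + (v - 2) ^ 2 := by
  nlinarith

/-- for the complete bipartite graph `K_{m,n}` with `m + n > 7` vertices,
there is no distribution `R` with `M̂_R = (1/(m+n)) J`; equivalently, the multiplicity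
bound `1 + 1 + (m+n-2)² ≤ (m+n)(m+n+1)/2` fails for `m + n ≥ 8`. -/
theorem no_uniform_average_mixing_completeBipartite {m n : ℕ}
    (hm : 0 < m) (hn : 0 < n) (h : 7 < m + n)
    [DecidableRel (completeBipartiteGraph (Fin m) (Fin n)).Adj] :
    (¬ ∃ (d : ℕ) (θ : Fin d → ℝ) (E : Fin d → Matrix (Fin m ⊕ Fin n) (Fin m ⊕ Fin n) ℝ)
        (μ : Measure ℝ), Function.Injective θ ∧
        (completeBipartiteGraph (Fin m) (Fin n)).adjMatrix ℝ = (∑ r, θ r • E r) ∧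
        (∀ r, (E r).IsSymm) ∧
        (∀ r s, E r * E s = if r = s then E r else 0) ∧
        (∑ r, E r = 1) ∧
        IsProbabilityMeasure μ ∧
        ammR θ E μ = (1 / (m + n) : ℝ) • Matrix.of fun _ _ => (1 : ℝ)) ∧
    ¬ ((1 : ℝ) + 1 + ((m : ℝ) + n - 2) ^ 2 ≤ ((m : ℝ) + n) * ((m : ℝ) + n + 1) / 2) := by
  refine ⟨?_, not_le.mpr (half_mul_add_one_lt_two_add_sub_two_sq (by exact_mod_cast h))⟩
  rintro ⟨d, θ, E, μ, hθ, hA, -, horth, hsum, hμ, hmix⟩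
  refine completeBipartite_ammR_ne_uniform (μ := μ) hθ hA horth hsum ?_ ?_ ?_ ?_
  · simpa using hm
  · simpa using hn
  · simpa [Nat.succ_le_iff] using h
  · simpa using hmix
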